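/- arXiv:2107.00896 — 3 statements merged into one kernel-verified Lean document; each statement's English description precedes it below -/
import Mathlib

section
/- Let d ≥ 2, 2 ≤ s ≤ d, Ω a subset of the closed unit ball 𝔹 of ℝ^d, and f ∈ C^{0,α}[0,1] for some 0 < α ≤ 1. Then for every N ∈ ℕ, with J = ⌈(2N+3)d/(s−1)⌉, there exist filters w^(1),…,w^(J) each supported in {0,…,s}, bias vectors b^(1),…,b^(J), a matrix F^{[J+1]} ∈ ℝ^{(2N+3)×(d+Js)} with identical rows, a bias vector b^(J+1) ∈ ℝ^{2N+3}, and c ∈ ℝ^{2N+3} with ‖c‖_∞ ≤ 4N‖f‖_∞/(1+4d), such that the network output h^(J+1)(x) = σ(F^{[J+1]} h^(J)(x) − b^(J+1)), where h^(0)(x)=x and h^(j)(x)=σ(T^{w^(j)} h^(j−1)(x) − b^(j)) for j = 1,…,J, satisfies sup_{x∈Ω} |c · h^(J+1)(x) − f(|x|²)| ≤ 3(1+4d)^α |f|_{C^{0,α}} N^{−α}. -/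
open Finset

/-- ReLU activation. -/
noncomputable def relu (u : ℝ) : ℝ := max u 0

/-- ceiling of `m / n` for natural numbers. -/
def ceilDiv' (m n : ℕ) : ℕ := (m + n - 1) / n

/-- A filter (sequence on ℤ) is supported in `{0, …, s}`. -/
def FilterSupp (s : ℕ) (w : ℤ → ℝ) : Prop :=
  ∀ k : ℤ, (k < 0 ∨ (s : ℤ) < k) → w k = 0

/-- A stack of purely convolutional ReLU layers (no downsampling), with input width `D`:
`h^(0)(v) = v`, `h^(j) = σ(T^{w^(j)} h^(j-1) - b^(j))`, widths `D + j·s`. -/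
noncomputable def convStack (s D : ℕ) (w : ℕ → ℤ → ℝ) (b : ℕ → ℕ → ℝ)
    (v : ℕ → ℝ) : ℕ → ℕ → ℝ
  | 0 => v
  | j + 1 => fun i =>
      relu ((∑ k ∈ Finset.range (D + j * s),
          w (j + 1) ((i : ℤ) - (k : ℤ)) * convStack s D w b v j k) - b (j + 1) i)

/-- View a vector of `ℝ^d` as a sequence (zero-padded). -/
noncomputable def emb (d : ℕ) (x : EuclideanSpace ℝ (Fin d)) : ℕ → ℝ :=
  fun i => if h : i < d then x ⟨i, h⟩ else 0

/-!
The polynomial `∑_{m < 2N+3} X^(m d)` is monic of degree at most `J (s - 1)`. Real irreducible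
polynomials have degree at most two, so it factors into `J` polynomials of degree at most `s`,
whose coefficient sequences are the filters. Composing Toeplitz convolutions multiplies the
polynomials, and biases adding large constants keep all intermediate layers in the linear range
of the ReLU, so unit `m d + r` of the last convolutional layer outputs `σ(x_r - (m/N - 1))`.
Weighting these by the slope increments of the piecewise linear interpolant of `u ↦ u² - 1`
produces `∑_r (x_r² - 1) = ‖x‖² - d` up to `d / (4N²)`. The output layer is the ReLU form of the
piecewise linear interpolant of `t ↦ f (min (t + d) 1)` on a grid of `2N + 1` cells over
`[-d, 1]`; at both nodes around the input, the Hölder bound on `f` gives the error `L ((1+4d)/N)^α`.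
-/

open Polynomial

theorem relu_of_nonneg {u : ℝ} (hu : 0 ≤ u) : relu u = u := max_eq_left hu

theorem relu_of_nonpos {u : ℝ} (hu : u ≤ 0) : relu u = 0 := max_eq_right hu

namespace Polynomial.IsMonicOfDegree

theorem exists_mul_isMonicOfDegree_of_le {P : ℝ[X]} {n m : ℕ} (hP : IsMonicOfDegree P n)
    (hm : m ≤ n) : ∃ A B : ℝ[X], ∃ k, m ≤ k ∧ k ≤ m + 1 ∧ k ≤ n ∧
      IsMonicOfDegree A k ∧ IsMonicOfDegree B (n - k) ∧ P = A * B := by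
  induction m with
  | zero => exact ⟨1, P, 0, le_rfl, zero_le_one, hm, by simp, by simpa using hP, (one_mul P).symm⟩
  | succ m ih =>
    obtain ⟨A, B, k, hmk, hkm, hkn, hA, hB, rfl⟩ := ih (by omega)
    rcases hkm.eq_or_lt with rfl | hkm
    · exact ⟨A, B, m + 1, le_rfl, by omega, hkn, hA, hB, rfl⟩
    obtain rfl : m = k := by omega
    have hB' : IsMonicOfDegree B (n - m - 1 + 1) := by rwa [show n - m - 1 + 1 = n - m by omega]
    obtain ⟨B₁, B₂, hB₁, rfl⟩ := hB'.eq_isMonicOfDegree_one_or_two_mul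
    obtain ⟨e, he, hB₁⟩ : ∃ e, (e = 1 ∨ e = 2) ∧ IsMonicOfDegree B₁ e := by
      rcases hB₁ with h | h
      exacts [⟨1, by simp, h⟩, ⟨2, by simp, h⟩]
    have hen : e ≤ n - m := by
      have := hB.natDegree_eq
      rw [natDegree_mul hB₁.ne_zero (right_ne_zero_of_mul hB.ne_zero), hB₁.natDegree_eq] at this
      omega
    have hB₂ : IsMonicOfDegree B₂ (n - m - e) :=
      hB₁.of_mul_left (by rwa [show e + (n - m - e) = n - m by omega])
    refine ⟨A * B₁, B₂, m + e, by omega, by omega, by omega, hA.mul hB₁, ?_,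
      (mul_assoc _ _ _).symm⟩
    rwa [show n - (m + e) = n - m - e by omega]

end Polynomial.IsMonicOfDegree

theorem exists_prod_range_eq_of_natDegree_le {s J : ℕ} {P : ℝ[X]} (hP : P.Monic)
    (hdeg : P.natDegree ≤ J * (s - 1)) :
    ∃ g : ℕ → ℝ[X], (∀ j, (g j).natDegree ≤ s) ∧ ∏ j ∈ range J, g j = P := by
  induction J generalizing P with
  | zero =>
    refine ⟨fun _ => 1, fun _ => by simp, ?_⟩
    simp [hP.natDegree_eq_zero.mp (by omega)]
  | succ J ih =>
    obtain ⟨A, B, k, hmk, hkm, hkn, hA, hB, rfl⟩ :=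
      (IsMonicOfDegree.mk rfl hP).exists_mul_isMonicOfDegree_of_le (min_le_right (s - 1) _)
    obtain ⟨g, hg, hprod⟩ := ih hB.monic (by rw [hB.natDegree_eq]; grind)
    refine ⟨Function.update g J A, fun j => ?_, ?_⟩
    · rcases eq_or_ne j J with rfl | hj
      · rw [Function.update_self, hA.natDegree_eq]; grind
      · rw [Function.update_of_ne hj]; exact hg j
    · rw [prod_range_succ, Function.update_self, mul_comm,
        prod_congr rfl fun j hj => Function.update_of_ne (mem_range.mp hj).ne _ _, hprod]

section CoeffInt

variable {R : Type*} [Semiring R]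

def coeffInt (P : R[X]) (k : ℤ) : R := if 0 ≤ k then P.coeff k.toNat else 0

theorem coeffInt_of_neg (P : R[X]) {k : ℤ} (hk : k < 0) : coeffInt P k = 0 :=
  if_neg hk.not_ge

@[simp]
theorem coeffInt_natCast (P : R[X]) (n : ℕ) : coeffInt P n = P.coeff n := by
  simp [coeffInt]

theorem coeffInt_sum {ι : Type*} (S : Finset ι) (P : ι → R[X]) (k : ℤ) :
    coeffInt (∑ i ∈ S, P i) k = ∑ i ∈ S, coeffInt (P i) k := by
  unfold coeffInt
  split_ifs <;> simp

theorem coeffInt_mul_monomial (P : R[X]) (n : ℕ) (r : R) (k : ℤ) :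
    coeffInt (P * monomial n r) k = coeffInt P (k - n) * r := by
  rcases lt_or_ge k 0 with hk | hk
  · rw [coeffInt_of_neg _ hk, coeffInt_of_neg _ (by omega), zero_mul]
  lift k to ℕ using hk
  rw [← C_mul_X_pow_eq_monomial, ← X_pow_mul, ← mul_assoc, coeffInt_natCast, coeff_mul_C,
    coeff_mul_X_pow']
  split_ifs with hnk
  · rw [show (k : ℤ) - n = (k - n : ℕ) by omega, coeffInt_natCast]
  · rw [coeffInt_of_neg _ (by omega), zero_mul]

theorem coeffInt_mul (A B : R[X]) (k : ℤ) {D : ℕ} (hD : B.natDegree < D) :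
    coeffInt (A * B) k = ∑ n ∈ range D, coeffInt A (k - n) * B.coeff n := by
  conv_lhs => rw [B.as_sum_range' D hD, mul_sum, coeffInt_sum]
  simp only [coeffInt_mul_monomial]

end CoeffInt

/-- The Toeplitz matrix `T^w` with `D` columns, applied to `v`. -/
noncomputable def toeplitzMul (D : ℕ) (w : ℤ → ℝ) (v : ℕ → ℝ) (i : ℕ) : ℝ :=
  ∑ k ∈ range D, w (i - k) * v k

theorem convStack_succ (s D : ℕ) (w : ℕ → ℤ → ℝ) (b : ℕ → ℕ → ℝ) (v : ℕ → ℝ) (j i : ℕ) :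
    convStack s D w b v (j + 1) i =
      relu (toeplitzMul (D + j * s) (w (j + 1)) (convStack s D w b v j) i - b (j + 1) i) :=
  rfl

theorem toeplitzMul_add_const (D : ℕ) (w : ℤ → ℝ) (v : ℕ → ℝ) (c : ℝ) (i : ℕ) :
    toeplitzMul D w (fun k => v k + c) i = toeplitzMul D w v i + c * toeplitzMul D w 1 i := by
  simp only [toeplitzMul, mul_add, sum_add_distrib, mul_sum, Pi.one_apply, mul_one]
  congr 1
  exact sum_congr rfl fun _ _ => mul_comm _ _

theorem sum_coeffInt_mul_coeffInt_sub (A B : ℝ[X]) (i l : ℕ) {D : ℕ} (hD : B.natDegree + l < D) :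
    ∑ k ∈ range D, coeffInt A (i - k) * coeffInt B (k - l) = coeffInt (A * B) (i - l) := by
  obtain ⟨D, rfl⟩ : ∃ D', D = l + D' := ⟨D - l, by omega⟩
  rw [sum_range_add, sum_eq_zero fun k hk => by
      rw [coeffInt_of_neg B (by simp at hk; omega), mul_zero],
    zero_add, coeffInt_mul A B _ (D := D) (by omega)]
  refine sum_congr rfl fun k _ => ?_
  rw [show ((l + k : ℕ) : ℤ) - l = k by push_cast; ring, coeffInt_natCast,
    show (i : ℤ) - (l + k : ℕ) = i - l - k by push_cast; ring]

theorem toeplitzMul_coeffInt_toeplitzMul (A B : ℝ[X]) (x : ℕ → ℝ) (i : ℕ) {d D : ℕ}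
    (hD : B.natDegree + d ≤ D) :
    toeplitzMul D (coeffInt A) (toeplitzMul d (coeffInt B) x) i =
      toeplitzMul d (coeffInt (A * B)) x i := by
  simp only [toeplitzMul, mul_sum]
  rw [sum_comm]
  refine sum_congr rfl fun l hl => ?_
  rw [← sum_coeffInt_mul_coeffInt_sub A B i l (D := D) (by simp at hl; omega), sum_mul]
  exact sum_congr rfl fun k _ => by ring

theorem toeplitzMul_coeffInt_one {d : ℕ} {x : ℕ → ℝ} (hx : ∀ l, d ≤ l → x l = 0) (i : ℕ) :
    toeplitzMul d (coeffInt 1) x i = x i := by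
  have hterm : ∀ l : ℕ, coeffInt 1 ((i : ℤ) - l) * x l = if l = i then x i else 0 := by
    intro l
    rcases lt_or_ge (i : ℤ) l with hil | hil
    · rw [coeffInt_of_neg _ (by omega), zero_mul, if_neg (by omega)]
    · rw [show (i : ℤ) - l = (i - l : ℕ) by omega, coeffInt_natCast, coeff_one]
      by_cases h : l = i
      · subst h; simp
      · rw [if_neg (by omega), if_neg h, zero_mul]
  simp only [toeplitzMul, hterm, sum_ite_eq', mem_range]
  split_ifs with h
  · rfl
  · exact (hx i (not_lt.mp h)).symm

noncomputable def l1Norm (P : ℝ[X]) : ℝ := ∑ n ∈ P.support, |P.coeff n|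

theorem abs_coeffInt_le_l1Norm (P : ℝ[X]) (k : ℤ) : |coeffInt P k| ≤ l1Norm P := by
  have h0 : 0 ≤ l1Norm P := sum_nonneg fun _ _ => abs_nonneg _
  rcases lt_or_ge k 0 with hk | hk
  · rwa [coeffInt_of_neg _ hk, abs_zero]
  lift k to ℕ using hk
  rw [coeffInt_natCast]
  by_cases hn : k ∈ P.support
  · exact single_le_sum (f := fun n => |P.coeff n|) (fun _ _ => abs_nonneg _) hn
  · rwa [notMem_support_iff.mp hn, abs_zero]

theorem abs_toeplitzMul_le {D : ℕ} {w : ℤ → ℝ} {x : ℕ → ℝ} {C : ℝ} (hw : ∀ k, |w k| ≤ C)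
    (hx : ∀ l < D, |x l| ≤ 1) (i : ℕ) : |toeplitzMul D w x i| ≤ D * C := by
  calc |toeplitzMul D w x i| ≤ ∑ l ∈ range D, |w (i - l) * x l| := abs_sum_le_sum_abs _ _
    _ ≤ ∑ _l ∈ range D, C := sum_le_sum fun l hl => by
        rw [abs_mul]
        exact (mul_le_mul (hw _) (hx l (mem_range.mp hl)) (abs_nonneg _)
          ((abs_nonneg _).trans (hw 0))).trans_eq (mul_one C)
    _ = D * C := by rw [sum_const, card_range, nsmul_eq_mul]

section ConvStack

variable (d s J : ℕ) (g : ℕ → ℝ[X])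

/-- Layer `j + 1` removes the shift `M j` carried by its input. Below layer `J` it adds the shift
`M (j + 1)`, large enough for the ReLU to act as the identity; layer `J` subtracts the
thresholds `θ` instead. -/
noncomputable def stackBias (M θ : ℕ → ℝ) : ℕ → ℕ → ℝ
  | 0, _ => 0
  | j + 1, i =>
    M j * toeplitzMul (d + j * s) (coeffInt (g j)) 1 i - if j + 1 < J then M (j + 1) else -θ i

noncomputable def stackShift (j : ℕ) : ℝ := if j = 0 then 0 else d * l1Norm (∏ t ∈ range j, g t)

variable {d s g}

theorem natDegree_prod_range_le (hg : ∀ j, (g j).natDegree ≤ s) (j : ℕ) :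
    (∏ t ∈ range j, g t).natDegree ≤ j * s :=
  (natDegree_prod_le _ _).trans <| (sum_le_sum fun t _ => hg t).trans (by simp)

theorem convStack_succ_eq_of_eq (hg : ∀ j, (g j).natDegree ≤ s) {M θ : ℕ → ℝ}
    {x : ℕ → ℝ} {j : ℕ} (hj : ∀ k, convStack s d (fun j => coeffInt (g (j - 1)))
      (stackBias d s J g M θ) x j k = toeplitzMul d (coeffInt (∏ t ∈ range j, g t)) x k + M j)
    (i : ℕ) :
    convStack s d (fun j => coeffInt (g (j - 1))) (stackBias d s J g M θ) x (j + 1) i =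
      relu (toeplitzMul d (coeffInt (∏ t ∈ range (j + 1), g t)) x i +
        (if j + 1 < J then M (j + 1) else -θ i)) := by
  rw [convStack_succ, funext hj, toeplitzMul_add_const, Nat.add_sub_cancel,
    toeplitzMul_coeffInt_toeplitzMul _ _ _ _ (by have := natDegree_prod_range_le hg j; omega),
    prod_range_succ, mul_comm (∏ t ∈ range j, g t), stackBias]
  ring_nf

theorem convStack_eq_add_stackShift (hg : ∀ j, (g j).natDegree ≤ s) {x : ℕ → ℝ}
    (hx : ∀ l, d ≤ l → x l = 0) (hx1 : ∀ l < d, |x l| ≤ 1) (θ : ℕ → ℝ) {j : ℕ} (hj : j < J)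
    (i : ℕ) :
    convStack s d (fun j => coeffInt (g (j - 1))) (stackBias d s J g (stackShift d g) θ) x j i =
      toeplitzMul d (coeffInt (∏ t ∈ range j, g t)) x i + stackShift d g j := by
  induction j generalizing i with
  | zero => simp [convStack, stackShift, toeplitzMul_coeffInt_one hx]
  | succ j ih =>
    rw [convStack_succ_eq_of_eq J hg (ih (by omega)), if_pos hj, relu_of_nonneg,
      stackShift, if_neg j.succ_ne_zero]
    exact neg_le_iff_add_nonneg.mp (abs_le.mp
      (abs_toeplitzMul_le (abs_coeffInt_le_l1Norm _) hx1 i)).1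

theorem convStack_eq_relu_sub (hg : ∀ j, (g j).natDegree ≤ s) {x : ℕ → ℝ}
    (hx : ∀ l, d ≤ l → x l = 0) (hx1 : ∀ l < d, |x l| ≤ 1) (θ : ℕ → ℝ) (hJ : 1 ≤ J) (i : ℕ) :
    convStack s d (fun j => coeffInt (g (j - 1))) (stackBias d s J g (stackShift d g) θ) x J i =
      relu (toeplitzMul d (coeffInt (∏ t ∈ range J, g t)) x i - θ i) := by
  obtain ⟨J, rfl⟩ : ∃ J', J = J' + 1 := ⟨J - 1, by omega⟩
  rw [convStack_succ_eq_of_eq _ hg (convStack_eq_add_stackShift _ hg hx hx1 θ (by omega)),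
    if_neg (lt_irrefl _), sub_eq_add_neg]

end ConvStack

/-- Convolution with `comb K d` stacks `K` copies of a signal of length `d`. -/
noncomputable def comb (K d : ℕ) : ℝ[X] := ∑ m ∈ range K, X ^ (m * d)

theorem isMonicOfDegree_comb {d : ℕ} (hd : 0 < d) (K : ℕ) :
    IsMonicOfDegree (comb (K + 1) d) (K * d) := by
  induction K with
  | zero => simp [comb]
  | succ K ih =>
    rw [comb, sum_range_succ]
    exact IsMonicOfDegree.add_left (by rw [← comb, ih.natDegree_eq]; nlinarith)
      (isMonicOfDegree_X_pow ℝ _)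

theorem coeff_comb_mul {K d m : ℕ} (hd : 0 < d) (hm : m < K) : (comb K d).coeff (m * d) = 1 := by
  rw [comb, finsetSum_coeff, sum_eq_single m]
  · simp
  · intro m' _ hm'
    rw [coeff_X_pow, if_neg fun h => hm' (Nat.eq_of_mul_eq_mul_right hd h).symm]
  · simp [hm]

theorem coeff_comb_of_not_dvd {K d n : ℕ} (hn : ¬ d ∣ n) : (comb K d).coeff n = 0 := by
  rw [comb, finsetSum_coeff]
  exact sum_eq_zero fun m _ => by rw [coeff_X_pow, if_neg fun h => hn ⟨m, by rw [h, mul_comm]⟩]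

theorem toeplitzMul_coeffInt_comb {K d : ℕ} (hd : 0 < d) (x : ℕ → ℝ) {i : ℕ} (hi : i < K * d) :
    toeplitzMul d (coeffInt (comb K d)) x i = x (i % d) := by
  rw [toeplitzMul, sum_eq_single (i % d)]
  · have hdiv : ((i % d : ℕ) : ℤ) + (i / d * d : ℕ) = i := by
      exact_mod_cast (mul_comm (i / d) d ▸ Nat.mod_add_div i d)
    rw [show (i : ℤ) - (i % d : ℕ) = (i / d * d : ℕ) by linear_combination -hdiv,
      coeffInt_natCast, coeff_comb_mul hd (Nat.div_lt_of_lt_mul (by linarith)), one_mul]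
  · intro l hl hli
    rcases lt_or_ge (i : ℤ) l with hil | hil
    · rw [coeffInt_of_neg _ (by omega), zero_mul]
    · rw [show (i : ℤ) - l = (i - l : ℕ) by omega, coeffInt_natCast,
        coeff_comb_of_not_dvd, zero_mul]
      intro hdvd
      refine hli ?_
      rw [← Nat.mod_eq_of_lt (mem_range.mp hl)]
      exact (Nat.modEq_iff_dvd' (by omega)).mpr hdvd
  · exact fun h => absurd (mem_range.mpr (Nat.mod_lt i hd)) h

theorem exists_grid_cell {a Δ T : ℝ} (n : ℕ) (h0 : a ≤ T) (h1 : T ≤ a + (n + 1) * Δ) :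
    ∃ j ≤ n, a + j * Δ ≤ T ∧ T ≤ a + (j + 1) * Δ := by
  induction n with
  | zero => exact ⟨0, le_rfl, by simpa using h0, by simpa using h1⟩
  | succ n ih =>
    by_cases h : T ≤ a + (n + 1) * Δ
    · obtain ⟨j, hj, hT⟩ := ih h
      exact ⟨j, by omega, hT⟩
    · exact ⟨n + 1, le_rfl, by push_cast; linarith, by push_cast at h1 ⊢; linarith⟩

theorem sum_mul_relu_sub_eq {c b : ℕ → ℝ} {T : ℝ} {K n : ℕ} (hKn : K ≤ n)
    (hlo : ∀ m < K, b m ≤ T) (hhi : ∀ m, K ≤ m → m < n → c m = 0 ∨ T ≤ b m) :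
    ∑ m ∈ range n, c m * relu (T - b m) = ∑ m ∈ range K, c m * (T - b m) := by
  rw [← sum_range_add_sum_Ico _ hKn, sum_eq_zero (s := Ico K n), add_zero]
  · exact sum_congr rfl fun m hm => by
      rw [relu_of_nonneg (sub_nonneg.mpr (hlo m (mem_range.mp hm)))]
  · intro m hm
    rw [mem_Ico] at hm
    rcases hhi m hm.1 hm.2 with h | h
    · rw [h, zero_mul]
    · rw [relu_of_nonpos (sub_nonpos.mpr h), mul_zero]

section Quadratic

variable {N : ℕ}

noncomputable def quadWeight (N m : ℕ) : ℝ :=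
  if m = 0 then 1 / N - 2 else if m < 2 * N then 2 / N else 0

noncomputable def quadKnot (N m : ℕ) : ℝ := m / N - 1

/-- The piecewise linear interpolant of `u ↦ u ^ 2 - 1` on `[-1, 1]` at the knots `m / N - 1`;
the units `m ≥ 2 * N` are idle. -/
noncomputable def quadInterp (N : ℕ) (u : ℝ) : ℝ :=
  ∑ m ∈ range (2 * N + 3), quadWeight N m * relu (u - quadKnot N m)

theorem sum_quadWeight_mul_sub (u : ℝ) {K : ℕ} (hK : K < 2 * N) :
    ∑ m ∈ range (K + 1), quadWeight N m * (u - quadKnot N m) =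
      ((2 * K + 1) / N - 2) * (u + 1) - (K + 1) * K / N ^ 2 := by
  have hN : (N : ℝ) ≠ 0 := by norm_cast; omega
  induction K with
  | zero =>
    rw [sum_range_one, quadWeight, if_pos rfl, quadKnot]
    push_cast
    field_simp
    ring
  | succ K ih =>
    rw [sum_range_succ, ih (by omega), quadWeight, if_neg (by omega), if_pos hK, quadKnot]
    push_cast
    field_simp
    ring

theorem quadInterp_eq {u : ℝ} {j : ℕ} (hj : j < 2 * N) (hlo : -1 + j * (1 / N) ≤ u)
    (hhi : u ≤ -1 + (j + 1) * (1 / N)) :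
    quadInterp N u = ((2 * j + 1) / N - 2) * (u + 1) - (j + 1) * j / N ^ 2 := by
  have hknot : ∀ m : ℕ, quadKnot N m = -1 + m * (1 / N) := fun m => by
    rw [quadKnot]; ring
  rw [quadInterp, sum_mul_relu_sub_eq (K := j + 1) (by omega), sum_quadWeight_mul_sub u hj]
  · intro m hm
    rw [hknot]
    exact le_trans (by gcongr; exact_mod_cast Nat.lt_succ_iff.mp hm) hlo
  · intro m hm _
    by_cases hm2 : m < 2 * N
    · right
      rw [hknot]
      exact hhi.trans (by gcongr; exact_mod_cast hm)
    · left
      rw [quadWeight, if_neg (by omega), if_neg hm2]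

theorem quadInterp_mem (hN : 1 ≤ N) {u : ℝ} (hu : |u| ≤ 1) :
    u ^ 2 - 1 ≤ quadInterp N u ∧ quadInterp N u ≤ u ^ 2 - 1 + 1 / (4 * N ^ 2) := by
  have hN0 : (0 : ℝ) < N := by exact_mod_cast hN
  obtain ⟨hu1, hu2⟩ := abs_le.mp hu
  have h2N : ((2 * N - 1 : ℕ) : ℝ) + 1 = 2 * N := by
    rw [Nat.cast_sub (by omega)]; push_cast; ring
  obtain ⟨j, hj, hlo, hhi⟩ := exists_grid_cell (Δ := 1 / N) (2 * N - 1) hu1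
    (by rw [h2N]; field_simp; linarith)
  set y := N * (u + 1) - j with hy
  have hy0 : 0 ≤ y := by
    rw [hy, sub_nonneg]; field_simp at hlo; linarith
  have hy1 : y ≤ 1 := by
    rw [hy, sub_le_iff_le_add]; field_simp at hhi; linarith
  have hgap : quadInterp N u - (u ^ 2 - 1) = y * (1 - y) / N ^ 2 := by
    rw [quadInterp_eq (by omega) hlo hhi, hy]; field_simp; ring
  constructor
  · nlinarith [div_nonneg (mul_nonneg hy0 (sub_nonneg.mpr hy1)) (sq_nonneg (N : ℝ))]
  · have : y * (1 - y) / N ^ 2 ≤ 1 / (4 * N ^ 2) := by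
      rw [div_le_div_iff₀ (by positivity) (by positivity)]
      nlinarith [sq_nonneg (2 * y - 1)]
    linarith

end Quadratic

section PiecewiseLinear

variable (F : ℕ → ℝ) (a Δ δ : ℝ) (n : ℕ)

noncomputable def gridSlope (j : ℕ) : ℝ := (F (j + 1) - F j) / Δ

/-- ReLU coefficients of the piecewise linear interpolant of the values `F j` at the nodes
`a + j * Δ`. The extra unit `n`, whose kink `a - δ` lies left of all nodes, supplies the
constant `F 0`, since the network has no output bias. -/
noncomputable def pwlCoeff (j : ℕ) : ℝ :=
  if j = n then F 0 / δ else gridSlope F Δ j - if j = 0 then F 0 / δ else gridSlope F Δ (j - 1)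

noncomputable def pwlBias (j : ℕ) : ℝ := if j = n then a - δ else a + j * Δ

variable {F a Δ δ n}

theorem sum_pwlCoeff_mul_sub (hΔ : Δ ≠ 0) (T : ℝ) {j : ℕ} (hj : j < n) :
    ∑ m ∈ range (j + 1), pwlCoeff F Δ δ n m * (T - (a + m * Δ)) =
      F j + gridSlope F Δ j * (T - (a + j * Δ)) - F 0 - F 0 / δ * (T - a) := by
  induction j with
  | zero =>
    rw [sum_range_one, pwlCoeff, if_neg (by omega), if_pos rfl, gridSlope]
    push_cast
    ring
  | succ j ih =>
    rw [sum_range_succ, ih (by omega), pwlCoeff, if_neg (by omega), if_neg (by omega),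
      Nat.add_sub_cancel]
    have hslope : gridSlope F Δ j * Δ = F (j + 1) - F j := div_mul_cancel₀ _ hΔ
    push_cast
    linear_combination hslope

theorem sum_pwlCoeff_mul_relu (hΔ : 0 < Δ) (hδ : 0 < δ) {T : ℝ} {j : ℕ} (hj : j < n)
    (hT : a + j * Δ ≤ T) (hT' : T ≤ a + (j + 1) * Δ) :
    ∑ m ∈ range (n + 1), pwlCoeff F Δ δ n m * relu (T - pwlBias a Δ δ n m) =
      F j + gridSlope F Δ j * (T - (a + j * Δ)) := by
  have haT : a ≤ T := le_trans (by simp only [le_add_iff_nonneg_right]; positivity) hT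
  have hnodes : ∑ m ∈ range n, pwlCoeff F Δ δ n m * relu (T - pwlBias a Δ δ n m) =
      ∑ m ∈ range n, pwlCoeff F Δ δ n m * relu (T - (a + m * Δ)) :=
    sum_congr rfl fun m hm => by rw [pwlBias, if_neg (mem_range.mp hm).ne]
  rw [sum_range_succ, hnodes, sum_mul_relu_sub_eq (K := j + 1) hj,
    sum_pwlCoeff_mul_sub hΔ.ne' T hj, pwlCoeff, if_pos rfl, pwlBias, if_pos rfl,
    relu_of_nonneg (by linarith)]
  · field_simp
    ring
  · intro m hm
    exact le_trans (by gcongr; exact_mod_cast Nat.lt_succ_iff.mp hm) hT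
  · intro m hm _
    exact Or.inr (hT'.trans (by gcongr; exact_mod_cast hm))

theorem abs_pwlCoeff_le {M B : ℝ} (hΔ : 0 < Δ) (hδ : 0 < δ) (hF : ∀ j, |F j| ≤ M)
    (hB₁ : 4 * M / Δ ≤ B) (hB₂ : 2 * M / Δ + M / δ ≤ B) (j : ℕ) : |pwlCoeff F Δ δ n j| ≤ B := by
  have hM : 0 ≤ M := (abs_nonneg _).trans (hF 0)
  have hslope : ∀ j, |gridSlope F Δ j| ≤ 2 * (M / Δ) := fun j => by
    rw [gridSlope, abs_div, abs_of_pos hΔ, ← mul_div_assoc]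
    gcongr
    linarith [abs_sub (F (j + 1)) (F j), hF j, hF (j + 1)]
  have hF0 : |F 0 / δ| ≤ M / δ := by
    rw [abs_div, abs_of_pos hδ]
    gcongr
    exact hF 0
  have hMΔ : 0 ≤ M / Δ := by positivity
  rw [mul_div_assoc] at hB₁ hB₂
  unfold pwlCoeff
  split_ifs
  · linarith
  · linarith [abs_sub (gridSlope F Δ j) (F 0 / δ), hslope j]
  · linarith [abs_sub (gridSlope F Δ j) (gridSlope F Δ (j - 1)), hslope j, hslope (j - 1)]

theorem abs_add_gridSlope_mul_sub_le (hΔ : 0 < Δ) {T y ε : ℝ} {j : ℕ} (hT : a + j * Δ ≤ T)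
    (hT' : T ≤ a + (j + 1) * Δ) (h₀ : |F j - y| ≤ ε) (h₁ : |F (j + 1) - y| ≤ ε) :
    |F j + gridSlope F Δ j * (T - (a + j * Δ)) - y| ≤ ε := by
  set θ := (T - (a + j * Δ)) / Δ with hθ
  have hθ0 : 0 ≤ θ := div_nonneg (by linarith) hΔ.le
  have hθ1 : θ ≤ 1 := (div_le_one hΔ).mpr (by linarith)
  have hconv : F j + gridSlope F Δ j * (T - (a + j * Δ)) - y =
      (1 - θ) * (F j - y) + θ * (F (j + 1) - y) := by
    rw [hθ, gridSlope]
    field_simp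
    ring
  rw [hconv]
  calc |(1 - θ) * (F j - y) + θ * (F (j + 1) - y)|
      ≤ (1 - θ) * |F j - y| + θ * |F (j + 1) - y| := by
        refine (abs_add_le _ _).trans_eq ?_
        rw [abs_mul, abs_mul, abs_of_nonneg (by linarith), abs_of_nonneg hθ0]
    _ ≤ (1 - θ) * ε + θ * ε := by gcongr
    _ = ε := by ring

end PiecewiseLinear

theorem abs_comp_min_one_sub_le {f : ℝ → ℝ} {L α : ℝ} (hα : 0 ≤ α)
    (hf : ∀ u ∈ Set.Icc (0 : ℝ) 1, ∀ v ∈ Set.Icc (0 : ℝ) 1, |f u - f v| ≤ L * |u - v| ^ α)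
    {p y E : ℝ} (hp : 0 ≤ p) (hy : y ∈ Set.Icc (0 : ℝ) 1) (hpy : |p - y| ≤ E) :
    |f (min p 1) - f y| ≤ L * E ^ α := by
  have hL : 0 ≤ L := by
    simpa using (abs_nonneg _).trans (hf 0 (by simp) 1 (by simp))
  have hmin : |min p 1 - y| ≤ E := by
    calc |min p 1 - y| = |min p 1 - min y 1| := by rw [min_eq_left hy.2]
      _ ≤ max |p - y| |1 - 1| := abs_min_sub_min_le_max _ _ _ _
      _ ≤ E := by simpa using hpy
  calc |f (min p 1) - f y| ≤ L * |min p 1 - y| ^ α :=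
        hf _ ⟨le_min hp zero_le_one, min_le_right _ _⟩ _ hy
    _ ≤ L * E ^ α := by gcongr

theorem filterSupp_coeffInt {s : ℕ} {P : ℝ[X]} (h : P.natDegree ≤ s) :
    FilterSupp s (coeffInt P) := by
  rintro k (hk | hk)
  · exact coeffInt_of_neg P hk
  · lift k to ℕ using by omega
    rw [coeffInt_natCast]
    exact coeff_eq_zero_of_natDegree_lt (by omega)

theorem le_ceilDiv'_mul (m : ℕ) {n : ℕ} (hn : 0 < n) : m ≤ ceilDiv' m n * n := by
  rw [ceilDiv', mul_comm]
  have := Nat.div_add_mod (m + n - 1) n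
  have := Nat.mod_lt (m + n - 1) hn
  omega

theorem emb_of_le {d : ℕ} (x : EuclideanSpace ℝ (Fin d)) {l : ℕ} (h : d ≤ l) : emb d x l = 0 :=
  dif_neg (by omega)

theorem abs_emb_le_norm {d : ℕ} (x : EuclideanSpace ℝ (Fin d)) (l : ℕ) : |emb d x l| ≤ ‖x‖ := by
  unfold emb
  split_ifs
  · exact PiLp.norm_apply_le x _
  · simp

theorem sum_emb_sq {d : ℕ} (x : EuclideanSpace ℝ (Fin d)) :
    ∑ r ∈ range d, emb d x r ^ 2 = ‖x‖ ^ 2 := by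
  rw [EuclideanSpace.real_norm_sq_eq, ← Fin.sum_univ_eq_sum_range (fun r => emb d x r ^ 2)]
  simp [emb]

theorem sum_range_mul_eq_sum_sum (K d : ℕ) (φ : ℕ → ℝ) :
    ∑ k ∈ range (K * d), φ k = ∑ m ∈ range K, ∑ r ∈ range d, φ (m * d + r) := by
  induction K with
  | zero => simp
  | succ K ih => rw [add_mul, one_mul, sum_range_add, ih, sum_range_succ]

theorem sum_quadInterp_emb_mem {d N : ℕ} (hN : 1 ≤ N) {x : EuclideanSpace ℝ (Fin d)}
    (hx : ‖x‖ ≤ 1) :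
    ‖x‖ ^ 2 - d ≤ ∑ r ∈ range d, quadInterp N (emb d x r) ∧
      ∑ r ∈ range d, quadInterp N (emb d x r) ≤ ‖x‖ ^ 2 - d + d / (4 * N ^ 2) := by
  have hmem r := quadInterp_mem hN ((abs_emb_le_norm x r).trans hx)
  rw [← sum_emb_sq]
  constructor
  · calc ∑ r ∈ range d, emb d x r ^ 2 - d = ∑ r ∈ range d, (emb d x r ^ 2 - 1) := by simp
      _ ≤ _ := sum_le_sum fun r _ => (hmem r).1
  · calc ∑ r ∈ range d, quadInterp N (emb d x r)
        ≤ ∑ r ∈ range d, (emb d x r ^ 2 - 1 + 1 / (4 * N ^ 2)) := sum_le_sum fun r _ => (hmem r).2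
      _ = _ := by simp [sum_add_distrib]; ring

section RadialNetwork

variable {N : ℕ}

/-- Unit `m * d + r` of the last convolutional layer computes `relu (x r - quadKnot N m)`, so this
row computes `(1 + 4 * d) * ∑ r, quadInterp N (x r)`, approximately `(1 + 4 * d) * (‖x‖² - d)`. -/
noncomputable def featureRow (d N k : ℕ) : ℝ :=
  if k < (2 * N + 3) * d then (1 + 4 * d) * quadWeight N (k / d) else 0

theorem sum_featureRow_mul {d D : ℕ} (hd : 0 < d) (hD : (2 * N + 3) * d ≤ D) (x H : ℕ → ℝ)
    (hH : ∀ k < (2 * N + 3) * d, H k = relu (x (k % d) - quadKnot N (k / d))) :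
    ∑ k ∈ range D, featureRow d N k * H k = (1 + 4 * d) * ∑ r ∈ range d, quadInterp N (x r) := by
  rw [← sum_subset (range_subset_range.mpr hD) fun k _ hk => by
      rw [featureRow, if_neg (by simpa using hk), zero_mul],
    sum_range_mul_eq_sum_sum, sum_comm, mul_sum]
  refine sum_congr rfl fun r hr => ?_
  rw [quadInterp, mul_sum]
  refine sum_congr rfl fun m hm => ?_
  have hmr : m * d + r < (2 * N + 3) * d := by
    have := mem_range.mp hm; have := mem_range.mp hr; nlinarith
  have hdiv : (m * d + r) / d = m := by
    rw [add_comm, Nat.add_mul_div_right _ _ hd, Nat.div_eq_of_lt (mem_range.mp hr), zero_add]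
  have hmod : (m * d + r) % d = r := by
    rw [add_comm, Nat.add_mul_mod_self_right, Nat.mod_eq_of_lt (mem_range.mp hr)]
  rw [featureRow, if_pos hmr, hH _ hmr, hdiv, hmod, mul_assoc]

/-- Mesh of the outer grid: `2 * N + 1` cells cover `[-d, 1]`, the range of `‖x‖² - d`. -/
noncomputable def outerMesh (d : ℝ) (N : ℕ) : ℝ := (1 + d) / (2 * N + 1)

/-- The output layer interpolates `t ↦ f (min (t + d) 1)` on the outer grid, in the variable
`(1 + 4 * d) * t` fed to it by `featureRow`. -/
noncomputable def outerCoeff (f : ℝ → ℝ) (d : ℝ) (N : ℕ) : ℕ → ℝ :=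
  pwlCoeff (fun j => f (min (j * outerMesh d N) 1)) ((1 + 4 * d) * outerMesh d N) (1 + 4 * d)
    (2 * N + 2)

noncomputable def outerBias (d : ℝ) (N : ℕ) : ℕ → ℝ :=
  pwlBias (-(1 + 4 * d) * d) ((1 + 4 * d) * outerMesh d N) (1 + 4 * d) (2 * N + 2)

theorem abs_outerCoeff_le {f : ℝ → ℝ} {d Mf : ℝ} (hd : 2 ≤ d) (hN : 1 ≤ N)
    (hMf : ∀ u ∈ Set.Icc (0 : ℝ) 1, |f u| ≤ Mf) (j : ℕ) :
    |outerCoeff f d N j| ≤ 4 * N * Mf / (1 + 4 * d) := by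
  have hNR : (1 : ℝ) ≤ N := by exact_mod_cast hN
  have hMf0 : 0 ≤ Mf := (abs_nonneg _).trans (hMf 0 (by simp))
  have hh : 0 < outerMesh d N := by unfold outerMesh; positivity
  refine abs_pwlCoeff_le (by positivity) (by positivity)
    (fun j => hMf _ ⟨le_min (by positivity) zero_le_one, min_le_right _ _⟩) ?_ ?_ j
  · unfold outerMesh
    field_simp
    nlinarith [mul_nonneg hMf0 (by nlinarith : (0 : ℝ) ≤ N * (1 + d) - (2 * N + 1))]
  · unfold outerMesh
    field_simp
    nlinarith [mul_nonneg hMf0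
      (by nlinarith : (0 : ℝ) ≤ 4 * N * (1 + d) - 2 * (2 * N + 1) - (1 + d))]

theorem outerMesh_add_le {d : ℝ} (hd : 0 ≤ d) (hN : 1 ≤ N) :
    outerMesh d N + d / (4 * N ^ 2) ≤ (1 + 4 * d) / N := by
  have hN0 : (0 : ℝ) < N := by exact_mod_cast hN
  have hNR : (1 : ℝ) ≤ N := by exact_mod_cast hN
  calc outerMesh d N + d / (4 * N ^ 2) ≤ (1 + d) / N + d / N := by
        unfold outerMesh
        gcongr <;> nlinarith
    _ ≤ (1 + 4 * d) / N := by
        rw [← add_div]; exact div_le_div_of_nonneg_right (by linarith) hN0.le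

theorem abs_sum_outerCoeff_mul_relu_sub_le {f : ℝ → ℝ} {d L α : ℝ} (hd : 0 ≤ d) (hN : 1 ≤ N)
    (hα : 0 ≤ α)
    (hf : ∀ u ∈ Set.Icc (0 : ℝ) 1, ∀ v ∈ Set.Icc (0 : ℝ) 1, |f u - f v| ≤ L * |u - v| ^ α)
    {y t : ℝ} (hy : y ∈ Set.Icc (0 : ℝ) 1) (ht₀ : y - d ≤ t)
    (ht₁ : t ≤ y - d + d / (4 * N ^ 2)) :
    |∑ m ∈ range (2 * N + 3), outerCoeff f d N m * relu ((1 + 4 * d) * t - outerBias d N m)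
      - f y| ≤ L * (1 + 4 * d) ^ α * (N : ℝ) ^ (-α) := by
  have hN0 : (0 : ℝ) < N := by exact_mod_cast hN
  have hd4 : (0 : ℝ) < 1 + 4 * d := by linarith
  have hE := outerMesh_add_le hd hN
  set h := outerMesh d N with hh_def
  have hh : 0 < h := by rw [hh_def, outerMesh]; positivity
  have hgrid : (2 * N + 1 : ℝ) * h = 1 + d := by rw [hh_def, outerMesh]; field_simp
  have ht : -d ≤ t ∧ t ≤ 1 := by
    have hNR : (1 : ℝ) ≤ N := by exact_mod_cast hN
    have : d / (4 * N ^ 2) ≤ d := div_le_self hd (by nlinarith)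
    constructor <;> linarith [hy.1, hy.2]
  obtain ⟨j, hj, hlo, hhi⟩ := exists_grid_cell (a := -(1 + 4 * d) * d) (Δ := (1 + 4 * d) * h)
    (T := (1 + 4 * d) * t) (2 * N) (by nlinarith) (by
      rw [show -(1 + 4 * d) * d + ((2 * N : ℕ) + 1) * ((1 + 4 * d) * h) =
        (1 + 4 * d) * (-d + (2 * N + 1) * h) by push_cast; ring, hgrid]
      nlinarith)
  have hcell₀ : j * h ≤ t + d := by nlinarith
  have hcell₁ : t + d ≤ (j + 1) * h := by nlinarith
  rw [outerCoeff, outerBias, sum_pwlCoeff_mul_relu (by positivity) hd4 (by omega) hlo hhi]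
  refine (abs_add_gridSlope_mul_sub_le (F := fun j => f (min (j * outerMesh d N) 1))
    (ε := L * ((1 + 4 * d) / N) ^ α) (by positivity) hlo hhi ?_ ?_).trans_eq ?_
  · refine abs_comp_min_one_sub_le hα hf (by positivity) hy (abs_sub_le_iff.mpr ⟨?_, ?_⟩) <;>
      linarith
  · push_cast
    refine abs_comp_min_one_sub_le hα hf (by positivity) hy (abs_sub_le_iff.mpr ⟨?_, ?_⟩) <;>
      linarith
  · rw [Real.div_rpow hd4.le hN0.le, Real.rpow_neg hN0.le, div_eq_mul_inv, mul_assoc]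

end RadialNetwork

theorem dcnn_approx_radial_general
    (d s : ℕ) (hd : 2 ≤ d) (hs : 2 ≤ s)
    (Ω : Set (EuclideanSpace ℝ (Fin d))) (hΩ : Ω ⊆ Metric.closedBall 0 1)
    (f : ℝ → ℝ) (α : ℝ) (hα0 : 0 < α) (L Mf : ℝ)
    (hf : ∀ u ∈ Set.Icc (0 : ℝ) 1, ∀ v ∈ Set.Icc (0 : ℝ) 1,
      |f u - f v| ≤ L * |u - v| ^ α)
    (hMf : ∀ u ∈ Set.Icc (0 : ℝ) 1, |f u| ≤ Mf)
    (N : ℕ) (hN : 1 ≤ N) :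
    ∃ (w : ℕ → ℤ → ℝ) (b : ℕ → ℕ → ℝ) (row b2 c : ℕ → ℝ),
      (∀ j, FilterSupp s (w j)) ∧
      (∀ j < 2 * N + 3, |c j| ≤ 4 * (N : ℝ) * Mf / (1 + 4 * (d : ℝ))) ∧
      ∀ x ∈ Ω,
        |(∑ j ∈ Finset.range (2 * N + 3),
            c j * relu ((∑ k ∈ Finset.range (d + ceilDiv' ((2 * N + 3) * d) (s - 1) * s),
                row k *
                  convStack s d w b (emb d x) (ceilDiv' ((2 * N + 3) * d) (s - 1)) k) - b2 j))
          - f (‖x‖ ^ 2)|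
          ≤ 3 * (1 + 4 * (d : ℝ)) ^ α * L * (N : ℝ) ^ (-α) := by
  set J := ceilDiv' ((2 * N + 3) * d) (s - 1)
  have hJ : (2 * N + 3) * d ≤ J * (s - 1) := le_ceilDiv'_mul _ (by omega)
  have hcomb := isMonicOfDegree_comb (d := d) (by omega) (2 * N + 2)
  obtain ⟨g, hg, hprod⟩ := exists_prod_range_eq_of_natDegree_le (s := s) (J := J)
    hcomb.monic (by rw [hcomb.natDegree_eq]; nlinarith)
  refine ⟨fun j => coeffInt (g (j - 1)), stackBias d s J g (stackShift d g)
    (fun i => quadKnot N (i / d)), featureRow d N, outerBias d N, outerCoeff f d N,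
    fun j => filterSupp_coeffInt (hg _),
    fun j _ => abs_outerCoeff_le (by exact_mod_cast hd) hN hMf j, fun x hx => ?_⟩
  have hx1 : ‖x‖ ≤ 1 := by simpa using hΩ hx
  have hJs : (2 * N + 3) * d ≤ d + J * s := by
    have := Nat.mul_le_mul_left J (Nat.sub_le s 1); omega
  rw [sum_featureRow_mul (by omega) hJs (emb d x) _ fun k hk => by
    rw [convStack_eq_relu_sub J hg (fun _ => emb_of_le x)
      (fun l _ => (abs_emb_le_norm x l).trans hx1) _ (by nlinarith), hprod,
      toeplitzMul_coeffInt_comb (by omega) _ hk]]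
  have hbound := abs_sum_outerCoeff_mul_relu_sub_le (by positivity) hN hα0.le hf
    ⟨by positivity, by nlinarith [norm_nonneg x]⟩ (sum_quadInterp_emb_mem hN hx1).1
    (sum_quadInterp_emb_mem hN hx1).2
  linarith [(abs_nonneg _).trans hbound]

/-- Theorem 2 (rates of approximating radial functions `f(|x|²)` by DCNNs with `J1 = 0`). -/
theorem dcnn_approx_radial
    (d s : ℕ) (hd : 2 ≤ d) (hs : 2 ≤ s) (hsd : s ≤ d)
    (Ω : Set (EuclideanSpace ℝ (Fin d))) (hΩ : Ω ⊆ Metric.closedBall 0 1)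
    (f : ℝ → ℝ) (α : ℝ) (hα0 : 0 < α) (hα1 : α ≤ 1) (L Mf : ℝ)
    (hf : ∀ u ∈ Set.Icc (0 : ℝ) 1, ∀ v ∈ Set.Icc (0 : ℝ) 1,
      |f u - f v| ≤ L * |u - v| ^ α)
    (hMf : ∀ u ∈ Set.Icc (0 : ℝ) 1, |f u| ≤ Mf)
    (N : ℕ) (hN : 1 ≤ N) :
    ∃ (w : ℕ → ℤ → ℝ) (b : ℕ → ℕ → ℝ) (row b2 c : ℕ → ℝ),
      (∀ j, FilterSupp s (w j)) ∧
      (∀ j < 2 * N + 3, |c j| ≤ 4 * (N : ℝ) * Mf / (1 + 4 * (d : ℝ))) ∧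
      ∀ x ∈ Ω,
        |(∑ j ∈ Finset.range (2 * N + 3),
            c j * relu ((∑ k ∈ Finset.range (d + ceilDiv' ((2 * N + 3) * d) (s - 1) * s),
                row k *
                  convStack s d w b (emb d x) (ceilDiv' ((2 * N + 3) * d) (s - 1)) k) - b2 j))
          - f (‖x‖ ^ 2)|
          ≤ 3 * (1 + 4 * (d : ℝ)) ^ α * L * (N : ℝ) ^ (-α) :=
  dcnn_approx_radial_general d s hd hs Ω hΩ f α hα0 L Mf hf hMf N hN
end

section
/- Let d ∈ ℕ and q ∈ ℕ, and set n_q = binom(d−1+q, q). Then there exists a set {ξ_k}_{k=1}^{n_q} of vectors in ℝ^d with Euclidean norm 1 such that for every polynomial Q on ℝ^d of degree at most q there exist real coefficients {β_{k,ℓ} : 1 ≤ k ≤ n_q, 1 ≤ ℓ ≤ q} with Q(x) = Q(0) + Σ_{k=1}^{n_q} Σ_{ℓ=1}^{q} β_{k,ℓ} (ξ_k · x)^ℓ for all x ∈ ℝ^d. -/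
/-!
Subtracting `Q(0)` leaves the homogeneous components of `Q` of degrees `1, …, q`, so it suffices
to find `n_q` unit directions `ξ_k` such that, for every `ℓ ≤ q`, the ridge powers `(ξ_k · x)^ℓ`
span the homogeneous polynomials of degree `ℓ`.

The powers `(a · x)^ℓ`, `a ∈ ℝ^d`, span the homogeneous polynomials of degree `ℓ`: for a linear
functional `f` killing all of them, the multinomial theorem makes `a ↦ f ((a · x)^ℓ)` a polynomial
in `a` whose coefficients are the values of `f` on the monomials, up to nonzero multinomial
factors; it vanishes identically, hence so does `f`. For `ℓ = q` this space has dimension `n_q`,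
so `n_q` of these directions already span it. The lower degrees follow by differentiation: `∂ᵢ`
maps `(ξ · x)^(ℓ+1)` to a multiple of `(ξ · x)^ℓ`, and by Euler's identity every homogeneous `r`
of degree `ℓ` equals `(d + ℓ)⁻¹ ∑ᵢ ∂ᵢ (xᵢ r)`.
-/

open Finset Submodule Module

namespace MvPolynomial

variable {σ K ι : Type*}

section CommSemiring

variable [CommSemiring K]

theorem sum_range_homogeneousComponent_of_totalDegree_le {Q : MvPolynomial σ K} {q : ℕ}
    (hQ : Q.totalDegree ≤ q) : ∑ ℓ ∈ range (q + 1), homogeneousComponent ℓ Q = Q :=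
  calc ∑ ℓ ∈ range (q + 1), homogeneousComponent ℓ Q
      = ∑ ℓ ∈ range (Q.totalDegree + 1), homogeneousComponent ℓ Q :=
        (sum_subset (range_subset_range.mpr (by omega)) fun ℓ _ hℓ =>
          homogeneousComponent_eq_zero ℓ Q (by simpa using hℓ)).symm
    _ = Q := sum_homogeneousComponent Q

variable [Fintype σ]

noncomputable def linearForm (a : σ → K) : MvPolynomial σ K := ∑ i, C (a i) * X i

@[simp]
theorem eval_linearForm (a x : σ → K) : eval x (linearForm a) = ∑ i, a i * x i := by
  simp [linearForm]

theorem isHomogeneous_linearForm_pow (a : σ → K) (ℓ : ℕ) :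
    (linearForm a ^ ℓ).IsHomogeneous ℓ := by
  simpa [linearForm] using
    (IsHomogeneous.sum univ _ 1 fun i _ => isHomogeneous_C_mul_X (a i) i).pow ℓ

theorem pderiv_linearForm (a : σ → K) (i : σ) : pderiv i (linearForm a) = C (a i) := by
  classical
  simp [linearForm, pderiv_X, Pi.single_apply]

theorem linearForm_smul (c : K) (a : σ → K) : linearForm (c • a) = C c * linearForm a := by
  simp [linearForm, mul_sum, mul_assoc]

theorem linearForm_pow_eq_sum_monomial [DecidableEq σ] (a : σ → K) (ℓ : ℕ) :
    linearForm a ^ ℓ = ∑ k ∈ piAntidiag univ ℓ,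
      monomial (Finsupp.equivFunOnFinite.symm k) (Nat.multinomial univ k * ∏ i, a i ^ k i) := by
  rw [linearForm, sum_pow_eq_sum_piAntidiag]
  refine sum_congr rfl fun k _ => ?_
  rw [monomial_eq, Finsupp.prod_fintype _ _ (fun i => pow_zero _)]
  simp [mul_pow, prod_mul_distrib, mul_assoc]

theorem sum_pderiv_X_mul {r : MvPolynomial σ K} {ℓ : ℕ} (hr : r.IsHomogeneous ℓ) :
    ∑ i, pderiv i (X i * r) = (Fintype.card σ + ℓ) • r := by
  simp only [pderiv_mul, pderiv_X_self, one_mul, sum_add_distrib, hr.sum_X_mul_pderiv,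
    sum_const, card_univ, add_smul]

theorem homogeneousSubmodule_eq_span_monomial [DecidableEq σ] (ℓ : ℕ) :
    homogeneousSubmodule σ K ℓ =
      span K (Set.range fun α : finsuppAntidiag univ ℓ => monomial α.1 (1 : K)) := by
  rw [homogeneousSubmodule_eq_finsupp_supported, AddMonoidAlgebra.supported_eq_span_single]
  congr 1
  ext p
  simp [Finsupp.degree_eq_sum, monomial, eq_comm]

end CommSemiring

section Field

variable [Field K] [Fintype σ]

theorem monomial_mem_span_linearForm_pow [CharZero K] {α : σ →₀ ℕ} {ℓ : ℕ}
    (hα : α.degree = ℓ) :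
    monomial α 1 ∈ span K (Set.range fun a : σ → K => linearForm a ^ ℓ) := by
  classical
  by_contra hα_mem
  obtain ⟨f, hfα, hf⟩ := exists_dual_map_eq_bot_of_notMem hα_mem inferInstance
  have hf_pow (a : σ → K) : f (linearForm a ^ ℓ) = 0 :=
    (mem_bot K).mp (hf ▸ mem_map_of_mem (subset_span ⟨a, rfl⟩))
  have hf_monomial (m : σ →₀ ℕ) (c : K) : f (monomial m c) = c * f (monomial m 1) := by
    rw [← smul_eq_mul, ← map_smul, smul_monomial, smul_eq_mul, mul_one]
  -- `G` is built so that `eval a G = f (linearForm a ^ ℓ)` by the multinomial theorem.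
  set G : MvPolynomial σ K := ∑ k ∈ piAntidiag univ ℓ,
    monomial (Finsupp.equivFunOnFinite.symm k)
      (Nat.multinomial univ k * f (monomial (Finsupp.equivFunOnFinite.symm k) 1))
  have hG : G = 0 := MvPolynomial.funext fun a => by
    rw [map_zero, ← hf_pow a, linearForm_pow_eq_sum_monomial, map_sum, map_sum]
    refine sum_congr rfl fun k _ => ?_
    rw [eval_monomial, Finsupp.prod_fintype _ _ fun i => pow_zero _, hf_monomial _ (_ * _)]
    simp only [Finsupp.coe_equivFunOnFinite_symm]
    ring
  have hα_antidiag : ⇑α ∈ piAntidiag univ ℓ := by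
    simp [← hα, Finsupp.degree_eq_sum]
  have hcoeff : coeff α G = Nat.multinomial univ α * f (monomial α 1) := by
    rw [coeff_sum, sum_eq_single_of_mem _ hα_antidiag]
    · simp
    · intro k _ hk
      rw [coeff_monomial, if_neg]
      rintro rfl
      exact hk rfl
  rw [hG, coeff_zero, eq_comm, mul_eq_zero] at hcoeff
  exact hcoeff.elim (by exact_mod_cast (Nat.multinomial_pos _ _).ne') hfα

theorem homogeneousSubmodule_le_span_linearForm_pow [CharZero K] (ℓ : ℕ) :
    homogeneousSubmodule σ K ℓ ≤ span K (Set.range fun a : σ → K => linearForm a ^ ℓ) := by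
  classical
  rw [homogeneousSubmodule_eq_span_monomial, span_le]
  rintro _ ⟨⟨α, hα⟩, rfl⟩
  exact monomial_mem_span_linearForm_pow <| by
    simpa [Finsupp.degree_eq_sum] using (mem_finsuppAntidiag.mp hα).1

instance (ℓ : ℕ) : FiniteDimensional K (homogeneousSubmodule σ K ℓ) :=
  Module.Finite.iff_fg.mpr (homogeneousSubmodule_fg σ K ℓ)

theorem finrank_homogeneousSubmodule_le (ℓ : ℕ) :
    finrank K (homogeneousSubmodule σ K ℓ) ≤ (Fintype.card σ + ℓ - 1).choose ℓ := by
  classical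
  rw [homogeneousSubmodule_eq_span_monomial]
  exact (finrank_range_le_card _).trans (by simp [card_finsuppAntidiag_nat_eq_choose])

theorem pderiv_mem_span_linearForm_pow (ξ : ι → σ → K) (i : σ) {ℓ : ℕ}
    {p : MvPolynomial σ K}
    (hp : p ∈ span K (Set.range fun k => linearForm (ξ k) ^ (ℓ + 1))) :
    pderiv i p ∈ span K (Set.range fun k => linearForm (ξ k) ^ ℓ) := by
  refine (span_le (p := (span K _).comap (pderiv i).toLinearMap)).mpr ?_ hp
  rintro _ ⟨k, rfl⟩
  have hderiv : pderiv i (linearForm (ξ k) ^ (ℓ + 1)) =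
      ((ℓ + 1 : K) * ξ k i) • linearForm (ξ k) ^ ℓ := by
    rw [pderiv_pow, pderiv_linearForm, smul_eq_C_mul]
    simp only [Nat.add_sub_cancel, Nat.cast_add, Nat.cast_one, C_mul, map_add, map_one,
      map_natCast]
    ring
  change pderiv i (linearForm (ξ k) ^ (ℓ + 1)) ∈ span K _
  exact hderiv ▸ smul_mem _ _ (subset_span ⟨k, rfl⟩)

theorem homogeneousSubmodule_le_span_linearForm_pow_of_succ [CharZero K] [Nonempty σ]
    (ξ : ι → σ → K) {ℓ : ℕ}
    (h : homogeneousSubmodule σ K (ℓ + 1) ≤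
      span K (Set.range fun k => linearForm (ξ k) ^ (ℓ + 1))) :
    homogeneousSubmodule σ K ℓ ≤ span K (Set.range fun k => linearForm (ξ k) ^ ℓ) := by
  intro r hr
  have hcard : ((Fintype.card σ + ℓ : ℕ) : K) ≠ 0 :=
    Nat.cast_ne_zero.mpr (Nat.add_pos_left Fintype.card_pos ℓ).ne'
  rw [← inv_smul_smul₀ hcard r, Nat.cast_smul_eq_nsmul, ← sum_pderiv_X_mul hr]
  refine smul_mem _ _ (sum_mem fun i _ => pderiv_mem_span_linearForm_pow ξ i (h ?_))
  simpa [add_comm] using (isHomogeneous_X K i).mul hr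

theorem homogeneousSubmodule_le_span_linearForm_pow_of_le [CharZero K] [Nonempty σ]
    (ξ : ι → σ → K) {q ℓ : ℕ}
    (h : homogeneousSubmodule σ K q ≤ span K (Set.range fun k => linearForm (ξ k) ^ q))
    (hℓ : ℓ ≤ q) :
    homogeneousSubmodule σ K ℓ ≤ span K (Set.range fun k => linearForm (ξ k) ^ ℓ) :=
  Nat.decreasingInduction
    (fun _ _ ih => homogeneousSubmodule_le_span_linearForm_pow_of_succ ξ ih) h hℓ

theorem exists_eq_C_coeff_zero_add_sum_linearForm_pow [Fintype ι] (ξ : ι → σ → K) {q : ℕ}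
    (h : ∀ ℓ ≤ q,
      homogeneousSubmodule σ K ℓ ≤ span K (Set.range fun k => linearForm (ξ k) ^ ℓ))
    {Q : MvPolynomial σ K} (hQ : Q.totalDegree ≤ q) :
    ∃ β : ι → Fin q → K,
      Q = C (coeff 0 Q) + ∑ k, ∑ ℓ : Fin q, C (β k ℓ) * linearForm (ξ k) ^ ((ℓ : ℕ) + 1) := by
  have hQ_sub : Q - C (coeff 0 Q) = ∑ ℓ : Fin q, homogeneousComponent (ℓ + 1) Q := by
    rw [sub_eq_iff_eq_add, Fin.sum_univ_eq_sum_range (fun ℓ => homogeneousComponent (ℓ + 1) Q),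
      ← homogeneousComponent_zero,
      ← sum_range_succ' (fun ℓ => homogeneousComponent ℓ Q),
      sum_range_homogeneousComponent_of_totalDegree_le hQ]
  have hmem : Q - C (coeff 0 Q) ∈
      span K (Set.range fun kℓ : ι × Fin q => linearForm (ξ kℓ.1) ^ ((kℓ.2 : ℕ) + 1)) := by
    rw [hQ_sub]
    refine sum_mem fun ℓ _ => span_mono ?_ (h _ ℓ.2 (homogeneousComponent_isHomogeneous _ Q))
    rintro _ ⟨k, rfl⟩
    exact ⟨(k, ℓ), rfl⟩
  obtain ⟨c, hc⟩ := (mem_span_range_iff_exists_fun K).mp hmem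
  refine ⟨fun k ℓ => c (k, ℓ), ?_⟩
  rw [← sub_eq_iff_eq_add', ← hc, Fintype.sum_prod_type]
  simp only [smul_eq_C_mul]

end Field

end MvPolynomial

open MvPolynomial

theorem exists_span_range_comp_eq_of_finrank_le {K V ι : Type*} [Field K] [AddCommGroup V]
    [Module K V] (v : ι → V) (i₀ : ι) {n : ℕ} [FiniteDimensional K (span K (Set.range v))]
    (hn : finrank K (span K (Set.range v)) ≤ n) :
    ∃ g : Fin n → ι, span K (Set.range (v ∘ g)) = span K (Set.range v) := by
  obtain ⟨κ, a, -, hspan, hli⟩ := exists_linearIndependent' K v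
  let w : κ → span K (Set.range v) := fun k => ⟨v (a k), subset_span ⟨a k, rfl⟩⟩
  have hw : LinearIndependent K w :=
    LinearIndependent.of_comp (span K (Set.range v)).subtype hli
  have := hw.finite
  have : Fintype κ := Fintype.ofFinite κ
  obtain ⟨e⟩ : Nonempty (κ ↪ Fin n) :=
    Function.Embedding.nonempty_of_card_le (by simpa using hw.fintype_card_le_finrank.trans hn)
  refine ⟨Function.extend e a fun _ => i₀,
    le_antisymm (span_mono (Set.range_comp_subset_range _ _)) ?_⟩
  rw [← hspan]
  refine span_mono ?_
  rintro _ ⟨k, rfl⟩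
  exact ⟨e k, by simp [e.injective.extend_apply]⟩

theorem exists_smul_eq_of_norm_eq_one {E : Type*} [NormedAddCommGroup E] [NormedSpace ℝ E]
    [Nontrivial E] (a : E) : ∃ c : ℝ, ∃ ξ : E, ‖ξ‖ = 1 ∧ c • ξ = a := by
  by_cases ha : a = 0
  · obtain ⟨ξ, hξ⟩ := exists_norm_eq E zero_le_one
    exact ⟨0, ξ, hξ, by simp [ha]⟩
  · exact ⟨‖a‖, ‖a‖⁻¹ • a, norm_smul_inv_norm ha,
      smul_inv_smul₀ (norm_ne_zero_iff.mpr ha) a⟩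

theorem homogeneousSubmodule_le_span_linearForm_pow_sphere {σ : Type*} [Fintype σ]
    [Nonempty σ] (ℓ : ℕ) :
    homogeneousSubmodule σ ℝ ℓ ≤
      span ℝ (Set.range fun ξ : Metric.sphere (0 : EuclideanSpace ℝ σ) 1 =>
        linearForm ⇑(ξ : EuclideanSpace ℝ σ) ^ ℓ) := by
  refine (homogeneousSubmodule_le_span_linearForm_pow ℓ).trans (span_le.mpr ?_)
  rintro _ ⟨a, rfl⟩
  obtain ⟨c, ξ, hξ, hcξ⟩ := exists_smul_eq_of_norm_eq_one (WithLp.toLp 2 a)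
  have : linearForm a ^ ℓ = c ^ ℓ • linearForm ⇑ξ ^ ℓ := by
    have ha : a = c • ⇑ξ := by simpa using (congrArg WithLp.ofLp hcξ).symm
    rw [ha, linearForm_smul, mul_pow, ← map_pow, smul_eq_C_mul]
  change linearForm a ^ ℓ ∈ span ℝ _
  rw [this]
  exact smul_mem _ _ (subset_span ⟨⟨ξ, by simpa using hξ⟩, rfl⟩)

theorem ridge_polynomial_identity_general (d q : ℕ) (hd : 1 ≤ d) :
    ∃ ξ : Fin (Nat.choose (d - 1 + q) q) → EuclideanSpace ℝ (Fin d),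
      (∀ k, ‖ξ k‖ = 1) ∧
      ∀ Q : MvPolynomial (Fin d) ℝ, Q.totalDegree ≤ q →
        ∃ β : Fin (Nat.choose (d - 1 + q) q) → Fin q → ℝ,
          ∀ x : EuclideanSpace ℝ (Fin d),
            MvPolynomial.eval (fun i => x i) Q =
              MvPolynomial.eval (fun _ => (0 : ℝ)) Q +
                ∑ k, ∑ ℓ, β k ℓ * (∑ i, ξ k i * x i) ^ ((ℓ : ℕ) + 1) := by
  have : Nonempty (Fin d) := ⟨⟨0, hd⟩⟩
  let S := Metric.sphere (0 : EuclideanSpace ℝ (Fin d)) 1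
  let v : S → MvPolynomial (Fin d) ℝ := fun ξ => linearForm ⇑(ξ : EuclideanSpace ℝ (Fin d)) ^ q
  have hv : span ℝ (Set.range v) = homogeneousSubmodule (Fin d) ℝ q :=
    le_antisymm
      (span_le.mpr <| Set.range_subset_iff.mpr fun ξ => isHomogeneous_linearForm_pow _ q)
      (homogeneousSubmodule_le_span_linearForm_pow_sphere q)
  have : FiniteDimensional ℝ (span ℝ (Set.range v)) := hv ▸ inferInstance
  obtain ⟨ξ₀, hξ₀⟩ := exists_norm_eq (EuclideanSpace ℝ (Fin d)) zero_le_one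
  obtain ⟨ξ, hξ⟩ := exists_span_range_comp_eq_of_finrank_le v
    ⟨ξ₀, mem_sphere_zero_iff_norm.mpr hξ₀⟩ (n := (d - 1 + q).choose q) <| by
      rw [hv]
      simpa [Nat.sub_add_comm hd] using finrank_homogeneousSubmodule_le (σ := Fin d) (K := ℝ) q
  refine ⟨fun k => ξ k, fun k => mem_sphere_zero_iff_norm.mp (ξ k).2, fun Q hQ => ?_⟩
  obtain ⟨β, hβ⟩ := exists_eq_C_coeff_zero_add_sum_linearForm_pow
    (fun k => ⇑(ξ k : EuclideanSpace ℝ (Fin d)))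
    (fun ℓ hℓ => homogeneousSubmodule_le_span_linearForm_pow_of_le _ (hξ.trans hv).ge hℓ) hQ
  refine ⟨β, fun x => ?_⟩
  conv_lhs => rw [hβ]
  simp [constantCoeff_eq]

/-- Lemma 4: there exist unit vectors `{ξ_k}_{k=1}^{n_q}`, `n_q = binom(d-1+q,q)`, such that
every polynomial `Q` of degree at most `q` on `ℝ^d` can be written as
`Q(x) = Q(0) + Σ_{k=1}^{n_q} Σ_{ℓ=1}^{q} β_{k,ℓ} (ξ_k·x)^ℓ`. -/
theorem ridge_polynomial_identity (d q : ℕ) (hd : 1 ≤ d) (hq : 1 ≤ q) :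
    ∃ ξ : Fin (Nat.choose (d - 1 + q) q) → EuclideanSpace ℝ (Fin d),
      (∀ k, ‖ξ k‖ = 1) ∧
      ∀ Q : MvPolynomial (Fin d) ℝ, Q.totalDegree ≤ q →
        ∃ β : Fin (Nat.choose (d - 1 + q) q) → Fin q → ℝ,
          ∀ x : EuclideanSpace ℝ (Fin d),
            MvPolynomial.eval (fun i => x i) Q =
              MvPolynomial.eval (fun _ => (0 : ℝ)) Q +
                ∑ k, ∑ ℓ, β k ℓ * (∑ i, ξ k i * x i) ^ ((ℓ : ℕ) + 1) :=
  ridge_polynomial_identity_general d q hd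
end

section
/- Let s ≥ 2, m ∈ ℕ, N ∈ ℕ, and define the sequence W^{[1]} supported in {0,…,(2N+3)m} by W^{[1]}_i = 1 if i ∈ {km : k = 0,1,…,2N+3} and W^{[1]}_i = 0 otherwise. Then there exist p ≤ ⌈(2N+3)m/(s−1)⌉ filters w^(1),…,w^(p), each supported in {0,…,s} and each satisfying ‖w^(j)‖_∞ ≤ s^{s/2} 2^s, such that W^{[1]} = w^(p) * ⋯ * w^(2) * w^(1). -/
open Finset

open scoped Classical

/-- Convolution of finitely supported real sequences on ℤ: `(u*v)_i = Σ_k u_{i-k} v_k`. -/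
noncomputable def seqConv (u v : ℤ → ℝ) : ℤ → ℝ := fun i => ∑ᶠ k : ℤ, u (i - k) * v k

/-- Iterated convolution of a list of sequences (empty list gives the delta sequence). -/
noncomputable def seqConvList : List (ℤ → ℝ) → ℤ → ℝ
  | [] => fun i => if i = 0 then 1 else 0
  | u :: rest => seqConv u (seqConvList rest)

/-- A sequence is supported in `{0, …, s}`. -/
def SeqSupp (s : ℕ) (w : ℤ → ℝ) : Prop :=
  ∀ k : ℤ, (k < 0 ∨ (s : ℤ) < k) → w k = 0

/-- The sequence `W^{[1]}`, equal to `1` at the multiples `km`, `0 ≤ k ≤ 2N+3`, of `m`,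
and `0` elsewhere. -/
noncomputable def Wone (m N : ℕ) : ℤ → ℝ := fun i =>
  if ∃ k : ℕ, k ≤ 2 * N + 3 ∧ i = (k : ℤ) * (m : ℤ) then 1 else 0

/-!
Under `i ↦ Xⁱ`, `W^{[1]}` is the coefficient sequence of `P = Σ_{k ≤ 2N+3} X^{km}` and
convolution is multiplication of (Laurent) polynomials. Since `P (X^m - 1) = X^{(2N+4)m} - 1`,
`P` is monic of degree `(2N+3)m` and all its complex roots lie on the unit circle. Grouping its
real irreducible factors, of degree `1` or `2`, greedily into blocks of degree `s - 1` or `s`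
factors `P` into at most `⌈(2N+3)m/(s-1)⌉` monic real polynomials of degree `≤ s`. Each block
divides `P`, so its roots lie on the unit circle too, its Mahler measure is `1`, and its
coefficients are bounded by binomial coefficients, hence by `2^s`.
-/

open Polynomial LaurentPolynomial

lemma seqConv_coeff_mul (x y : ℝ[T;T⁻¹]) : seqConv x.coeff y.coeff = (x * y).coeff := by
  funext i
  rw [AddMonoidAlgebra.coeff_mul_apply_right, seqConv, Finsupp.sum,
    finsum_eq_sum_of_support_subset _ (s := y.coeff.support) (by simp)]
  simp only [sub_eq_add_neg]

lemma seqConvList_map_coeff (L : List ℝ[T;T⁻¹]) :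
    seqConvList (L.map fun x : ℝ[T;T⁻¹] => ⇑x.coeff) = L.prod.coeff := by
  induction L with
  | nil =>
    funext i
    simp [seqConvList, ← T_zero, eq_comm]
  | cons x L ih => rw [List.map_cons, seqConvList, ih, seqConv_coeff_mul, List.prod_cons]

section toLaurent

variable {R : Type*} [Semiring R]

lemma coeff_toLaurent_natCast (p : R[X]) (n : ℕ) : (toLaurent p).coeff n = p.coeff n := by
  rw [coeff_toLaurent]
  exact (Finsupp.mapDomain_apply Nat.castEmbedding.injective _ n).trans (toFinsupp_apply p n)

lemma coeff_toLaurent_of_neg (p : R[X]) {i : ℤ} (hi : i < 0) : (toLaurent p).coeff i = 0 := by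
  rw [coeff_toLaurent]
  exact Finsupp.mapDomain_of_notMem_range _ _ (by rintro ⟨n, rfl⟩; simp at hi; omega)

end toLaurent

lemma seqSupp_coeff_toLaurent {s : ℕ} {p : ℝ[X]} (hp : p.natDegree ≤ s) :
    SeqSupp s (toLaurent p).coeff := by
  rintro i (hi | hi)
  · exact coeff_toLaurent_of_neg p hi
  · lift i to ℕ using by omega
    rw [coeff_toLaurent_natCast]
    exact coeff_eq_zero_of_natDegree_lt (by omega)

lemma abs_coeff_toLaurent_le {p : ℝ[X]} {C : ℝ} (hC : 0 ≤ C) (hp : ∀ n, |p.coeff n| ≤ C)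
    (i : ℤ) : |(toLaurent p).coeff i| ≤ C := by
  rcases lt_or_ge i 0 with hi | hi
  · rwa [coeff_toLaurent_of_neg p hi, abs_zero]
  · lift i to ℕ using hi
    rw [coeff_toLaurent_natCast]
    exact hp i

lemma Polynomial.Monic.exists_mul_natDegree_eq_or_eq_succ {f : ℝ[X]} (hf : f.Monic) {k : ℕ}
    (hk : k ≤ f.natDegree) :
    ∃ g h : ℝ[X], g.Monic ∧ h.Monic ∧ (g.natDegree = k ∨ g.natDegree = k + 1) ∧ f = g * h := by
  induction k with
  | zero => exact ⟨1, f, monic_one, hf, by simp, (one_mul f).symm⟩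
  | succ k ih =>
    obtain ⟨g, h, hg, hh, hk' | hk', rfl⟩ := ih (by omega)
    · have hdeg : h.IsMonicOfDegree (h.natDegree - 1 + 1) := by
        refine ⟨?_, hh⟩
        rw [hg.natDegree_mul hh] at hk
        omega
      obtain ⟨h₁, h₂, hd, rfl⟩ := hdeg.eq_isMonicOfDegree_one_or_two_mul
      have hh₁ : h₁.Monic := by rcases hd with hd | hd <;> exact hd.monic
      have hh₂ : h₂.Monic := hh₁.of_mul_monic_left hh
      refine ⟨g * h₁, h₂, hg.mul hh₁, hh₂, ?_, (mul_assoc _ _ _).symm⟩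
      rw [hg.natDegree_mul hh₁]
      rcases hd with hd | hd <;> rw [hd.natDegree_eq] <;> omega
    · exact ⟨g, h, hg, hh, Or.inl hk', rfl⟩

lemma Polynomial.Monic.exists_list_prod_eq_of_natDegree_le {s : ℕ} (hs : 2 ≤ s) {f : ℝ[X]}
    (hf : f.Monic) :
    ∃ B : List ℝ[X], B.prod = f ∧ (∀ b ∈ B, b.Monic ∧ b.natDegree ≤ s) ∧
      B.length * (s - 1) ≤ f.natDegree + (s - 2) := by
  induction hd : f.natDegree using Nat.strong_induction_on generalizing f with
  | _ d ih =>
    by_cases hds : d ≤ s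
    · rcases Nat.eq_zero_or_pos d with rfl | hd0
      · exact ⟨[], by simp [hf.natDegree_eq_zero.1 hd], by simp, by simp⟩
      · exact ⟨[f], by simp, by simp [hf, hd, hds], by simp; omega⟩
    · obtain ⟨g, h, hg, hh, hgd, rfl⟩ :=
        hf.exists_mul_natDegree_eq_or_eq_succ (k := s - 1) (by omega)
      rw [hg.natDegree_mul hh] at hd
      obtain ⟨B, hB, hBs, hBl⟩ := ih h.natDegree (by omega) hh rfl
      refine ⟨g :: B, by rw [List.prod_cons, hB], ?_, ?_⟩
      · exact List.forall_mem_cons.2 ⟨⟨hg, by omega⟩, hBs⟩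
      · rw [List.length_cons, add_mul, one_mul]
        omega

lemma Polynomial.Monic.norm_coeff_le_choose_of_norm_root_le_one {g : ℂ[X]} (hg : g.Monic)
    (hroots : ∀ z ∈ g.roots, ‖z‖ ≤ 1) (k : ℕ) : ‖g.coeff k‖ ≤ g.natDegree.choose k := by
  have hM : g.mahlerMeasure = 1 := by
    rw [mahlerMeasure_eq_leadingCoeff_mul_prod_roots, hg.leadingCoeff, norm_one, one_mul]
    refine Multiset.prod_eq_one fun x hx => ?_
    obtain ⟨z, hz, rfl⟩ := Multiset.mem_map.1 hx
    exact max_eq_left (hroots z hz)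
  simpa [hM] using norm_coeff_le_choose_mul_mahlerMeasure k g

lemma Polynomial.Monic.abs_coeff_le_choose_of_dvd {f g : ℝ[X]} (hf : f ≠ 0)
    (hroots : ∀ z ∈ (f.map (algebraMap ℝ ℂ)).roots, ‖z‖ ≤ 1) (hg : g.Monic) (hgf : g ∣ f)
    (k : ℕ) : |g.coeff k| ≤ g.natDegree.choose k := by
  have hsub := roots.le_of_dvd ((Polynomial.map_ne_zero_iff (algebraMap ℝ ℂ).injective).2 hf)
    (Polynomial.map_dvd (algebraMap ℝ ℂ) hgf)
  have := (hg.map (algebraMap ℝ ℂ)).norm_coeff_le_choose_of_norm_root_le_one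
    (fun z hz => hroots z (Multiset.mem_of_le hsub hz)) k
  rwa [coeff_map, hg.natDegree_map, Complex.coe_algebraMap, Complex.norm_real,
    Real.norm_eq_abs] at this

lemma norm_eq_one_of_eval_geom_sum_X_pow_eq_zero {m n : ℕ} (hm : 0 < m) (hn : 0 < n) {z : ℂ}
    (hz : (∑ k ∈ range n, ((X : ℂ[X]) ^ m) ^ k).eval z = 0) : ‖z‖ = 1 := by
  have hpow : z ^ (m * n) = 1 := by
    have := geom_sum_mul (z ^ m) n
    simp only [eval_finsetSum, eval_pow, eval_X] at hz
    rw [hz, zero_mul, ← pow_mul] at this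
    exact sub_eq_zero.1 this.symm
  exact Complex.norm_eq_one_of_pow_eq_one hpow (by positivity)

lemma isMonicOfDegree_geom_sum_X_pow {R : Type*} [CommRing R] [Nontrivial R] {m : ℕ}
    (hm : 0 < m) (n : ℕ) :
    (∑ k ∈ range (n + 1), ((X : R[X]) ^ m) ^ k).IsMonicOfDegree (n * m) := by
  have hq : ((X : R[X]) ^ m - 1).IsMonicOfDegree m :=
    (isMonicOfDegree_X_pow (R := R) m).sub (by simpa)
  refine IsMonicOfDegree.of_mul_right hq ?_
  rw [geom_sum_mul, ← pow_mul, show n * m + m = m * (n + 1) by ring]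
  exact (isMonicOfDegree_X_pow (R := R) _).sub (by rw [natDegree_one]; positivity)

noncomputable def wonePoly (m N : ℕ) : ℝ[X] := ∑ k ∈ range (2 * N + 4), (X ^ m) ^ k

lemma Wone_eq_coeff_toLaurent {m : ℕ} (hm : 0 < m) (N : ℕ) :
    Wone m N = (toLaurent (wonePoly m N)).coeff := by
  funext i
  rw [wonePoly, map_sum, AddMonoidAlgebra.coeff_sum, Finsupp.finsetSum_apply]
  simp only [← pow_mul, toLaurent_X_pow, T_apply]
  have hinj : Set.InjOn (fun k : ℕ => ((m * k : ℕ) : ℤ)) (range (2 * N + 4)) := fun a _ b _ h => by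
    simpa [hm.ne'] using h
  rw [← Finset.sum_image (f := fun j : ℤ => if j = i then (1 : ℝ) else 0) hinj, sum_ite_eq',
    Wone]
  congr 1
  simp only [mem_image, mem_range, eq_iff_iff]
  refine exists_congr fun k => ?_
  constructor <;> rintro ⟨hk, rfl⟩ <;> exact ⟨by omega, by push_cast; ring⟩

lemma isMonicOfDegree_wonePoly {m : ℕ} (hm : 0 < m) (N : ℕ) :
    (wonePoly m N).IsMonicOfDegree ((2 * N + 3) * m) :=
  isMonicOfDegree_geom_sum_X_pow hm (2 * N + 3)

lemma norm_root_wonePoly_le_one {m : ℕ} (hm : 0 < m) (N : ℕ) :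
    ∀ z ∈ ((wonePoly m N).map (algebraMap ℝ ℂ)).roots, ‖z‖ ≤ 1 := by
  intro z hz
  refine (norm_eq_one_of_eval_geom_sum_X_pow_eq_zero hm (n := 2 * N + 4) (by omega) ?_).le
  simpa [wonePoly, Polynomial.map_sum] using (mem_roots'.1 hz).2

lemma Polynomial.Monic.abs_coeff_le_two_pow_of_dvd_wonePoly {m : ℕ} (hm : 0 < m) {N : ℕ}
    {b : ℝ[X]} (hb : b.Monic) (hbP : b ∣ wonePoly m N) (k : ℕ) :
    |b.coeff k| ≤ 2 ^ b.natDegree :=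
  (hb.abs_coeff_le_choose_of_dvd (isMonicOfDegree_wonePoly hm N).ne_zero
    (norm_root_wonePoly_le_one hm N) hbP k).trans (mod_cast Nat.choose_le_two_pow _ _)

theorem Wone_factorization_general (s m N : ℕ) (hs : 2 ≤ s) (hm : 1 ≤ m) :
    ∃ (p : ℕ) (w : Fin p → ℤ → ℝ),
      p ≤ ceilDiv' ((2 * N + 3) * m) (s - 1) ∧
      (∀ j, SeqSupp s (w j)) ∧
      (∀ j, ∀ k : ℤ, |w j k| ≤ (s : ℝ) ^ ((s : ℝ) / 2) * 2 ^ s) ∧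
      Wone m N = seqConvList (List.ofFn w) := by
  have hP := isMonicOfDegree_wonePoly hm N
  obtain ⟨B, hprod, hdeg, hlen⟩ := hP.monic.exists_list_prod_eq_of_natDegree_le hs
  refine ⟨B.length, fun j => (toLaurent B[j]).coeff, ?_,
    fun j => seqSupp_coeff_toLaurent (hdeg _ (List.getElem_mem _)).2,
    fun j => abs_coeff_toLaurent_le (by positivity) fun k => ?_, ?_⟩
  · rw [hP.natDegree_eq] at hlen
    unfold ceilDiv'
    rw [Nat.le_div_iff_mul_le (by omega)]
    omega
  · obtain ⟨hb, hbs⟩ := hdeg _ (List.getElem_mem j.isLt)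
    have hs1 : (1 : ℝ) ≤ s := mod_cast hs.trans' one_le_two
    calc |B[j].coeff k| ≤ 2 ^ B[j].natDegree :=
          hb.abs_coeff_le_two_pow_of_dvd_wonePoly hm (hprod ▸ List.dvd_prod (List.getElem_mem _)) k
      _ ≤ 2 ^ s := pow_le_pow_right₀ one_le_two hbs
      _ ≤ (s : ℝ) ^ ((s : ℝ) / 2) * 2 ^ s :=
          le_mul_of_one_le_left (by positivity) (Real.one_le_rpow hs1 (by positivity))
  · rw [Wone_eq_coeff_toLaurent hm, ← hprod, map_list_prod, ← seqConvList_map_coeff, List.map_map,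
      ← List.ofFn_getElem_eq_map]
    rfl

/-- Convolutional factorization of `W^{[1]}` into at most `⌈(2N+3)m/(s-1)⌉` filters,
each supported in `{0,…,s}` and with sup-norm at most `s^{s/2} 2^s`. -/
theorem Wone_factorization (s m N : ℕ) (hs : 2 ≤ s) (hm : 1 ≤ m) (hN : 1 ≤ N) :
    ∃ (p : ℕ) (w : Fin p → ℤ → ℝ),
      p ≤ ceilDiv' ((2 * N + 3) * m) (s - 1) ∧
      (∀ j, SeqSupp s (w j)) ∧
      (∀ j, ∀ k : ℤ, |w j k| ≤ (s : ℝ) ^ ((s : ℝ) / 2) * 2 ^ s) ∧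
      Wone m N = seqConvList (List.ofFn w) :=
  Wone_factorization_general s m N hs hm
end
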